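/- arXiv:math/0612494 — 3 statements merged into one kernel-verified Lean document; each statement's English description precedes it below -/
import Mathlib

section
/- Let s ≥ 1 be an integer, Q(x) = 3 sech²(x/2), 𝓛 w = −w'' − Q w + w, and define r_{s+1} = −((s + 3/2)/(s − 3/2)) Q and 𝓛_{s+1} w = ∂_x^{2s+2} w + r_{s+1} ∂_x^{2s} w. Then there exists C > 0 such that for every complex-valued Schwartz function w on ℝ, | Re ∫_ℝ ∂_x(𝓛 w) · \overline{𝓛_{s+1} w} dx | ≤ C ‖w‖_{H^s(ℝ)}². -/
open MeasureTheory ComplexConjugate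

/-- The KdV soliton profile `Q(x) = 3 sech²(x/2)`. -/
noncomputable def Q (x : ℝ) : ℝ := 3 * (1 / Real.cosh (x / 2)) ^ 2

/-- The linearized KdV operator `𝓛 w = −w'' − Q w + w`. -/
noncomputable def Lop (w : ℝ → ℂ) (x : ℝ) : ℂ :=
  -iteratedDeriv 2 w x - (Q x : ℂ) * w x + w x

/-- The multiplier `r_{s+1} = −((s+3/2)/(s−3/2)) Q`. -/
noncomputable def r (s : ℕ) (x : ℝ) : ℝ :=
  -(((s : ℝ) + 3 / 2) / ((s : ℝ) - 3 / 2)) * Q x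

/-- The higher-order operator `𝓛_{s+1} w = ∂ₓ^{2s+2} w + r_{s+1} ∂ₓ^{2s} w`. -/
noncomputable def Ls (s : ℕ) (w : ℝ → ℂ) (x : ℝ) : ℂ :=
  iteratedDeriv (2 * s + 2) w x + (r s x : ℂ) * iteratedDeriv (2 * s) w x

/-- The squared `H^s(ℝ)` norm `Σ_{m ≤ s} ‖∂ₓ^m f‖²_{L²}`. -/
noncomputable def HsSq (s : ℕ) (f : ℝ → ℂ) : ℝ :=
  ∑ m ∈ Finset.range (s + 1), ∫ x : ℝ, ‖iteratedDeriv m f x‖ ^ 2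

/-!
All coefficients are polynomials in the sigmoid `σ = (1 + e^{-x})⁻¹`: `Q = 12 σ (1 - σ)`, and
`σ' = σ - σ²`, so these polynomials are bounded and closed under differentiation. Expanding
`∂(𝓛 w) · conj (𝓛_{s+1} w)` turns the quantity into a combination of pairings
`B_p(a, b) = ∫ p(σ) ⟪∂^a w, ∂^b w⟫`. Integration by parts,
`B_p(a, b + 1) = -B_{p'}(a, b) - B_p(a + 1, b)`, shows that `B_p(a, b) = O(‖w‖²_{H^s})` when
`a + b ≤ 2s + 1`, and that modulo such terms the top-order pairings `B_{Q'}(0, 2s + 2)`,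
`B_Q(1, 2s + 2)` and `B_r(3, 2s)` equal `B_{Q'}(s + 1, s + 1)` times `(-1)^{s+1}`,
`(-1)^{s+1} (s + 1/2)` and `(-1)^{s+1} (s - 3/2) r/Q`. These coefficients sum to zero exactly
for `r/Q = -(s + 3/2)/(s - 3/2)`; the pairings with weight `1` and odd `a + b` vanish.
-/

open Polynomial
open scoped SchwartzMap InnerProductSpace

noncomputable section

namespace Polynomial

def evalSigmoid (p : ℝ[X]) (x : ℝ) : ℝ := p.eval (Real.sigmoid x)

def sigmoidDerivative (p : ℝ[X]) : ℝ[X] := derivative p * (X - X ^ 2)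

@[simp] lemma evalSigmoid_one (x : ℝ) : (1 : ℝ[X]).evalSigmoid x = 1 := by simp [evalSigmoid]

@[simp] lemma evalSigmoid_neg (p : ℝ[X]) (x : ℝ) : (-p).evalSigmoid x = -p.evalSigmoid x := by
  simp [evalSigmoid]

@[simp] lemma evalSigmoid_smul (c : ℝ) (p : ℝ[X]) (x : ℝ) :
    (c • p).evalSigmoid x = c * p.evalSigmoid x := by
  simp [evalSigmoid]

@[simp] lemma evalSigmoid_mul (p q : ℝ[X]) (x : ℝ) :
    (p * q).evalSigmoid x = p.evalSigmoid x * q.evalSigmoid x := by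
  simp [evalSigmoid]

@[simp] lemma sigmoidDerivative_one : sigmoidDerivative (1 : ℝ[X]) = 0 := by
  simp [sigmoidDerivative]

lemma hasDerivAt_evalSigmoid (p : ℝ[X]) (x : ℝ) :
    HasDerivAt p.evalSigmoid (p.sigmoidDerivative.evalSigmoid x) x := by
  refine ((p.hasDerivAt _).comp x (Real.hasDerivAt_sigmoid x)).congr_deriv ?_
  simp only [evalSigmoid, sigmoidDerivative, eval_mul, eval_sub, eval_X, eval_pow]
  ring

lemma continuous_evalSigmoid (p : ℝ[X]) : Continuous p.evalSigmoid :=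
  p.continuous.comp continuous_sigmoid

lemma exists_abs_evalSigmoid_le (p : ℝ[X]) :
    ∃ C, 0 ≤ C ∧ ∀ x, |p.evalSigmoid x| ≤ C := by
  obtain ⟨C, hC⟩ := (isCompact_Icc (a := (0 : ℝ)) (b := 1)).exists_bound_of_continuousOn
    p.continuous.continuousOn
  refine ⟨max C 0, le_max_right _ _, fun x => (hC _ ?_).trans (le_max_left _ _)⟩
  exact ⟨Real.sigmoid_nonneg x, Real.sigmoid_le_one x⟩

end Polynomial

namespace SchwartzMap

variable {F : Type*} [NormedAddCommGroup F] [NormedSpace ℝ F]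

lemma coe_derivCLM_iterate (n : ℕ) (w : 𝓢(ℝ, F)) :
    ⇑((derivCLM ℝ F)^[n] w) = iteratedDeriv n w := by
  induction n with
  | zero => rfl
  | succ n ih =>
    rw [Function.iterate_succ_apply', iteratedDeriv_succ, ← ih]
    rfl

lemma hasDerivAt_iteratedDeriv (w : 𝓢(ℝ, F)) (n : ℕ) (x : ℝ) :
    HasDerivAt (iteratedDeriv n w) (iteratedDeriv (n + 1) w x) x := by
  rw [iteratedDeriv_succ]
  exact ((w.smooth ⊤).differentiable_iteratedDeriv n (mod_cast ENat.natCast_lt_top n)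
    x).hasDerivAt

lemma continuous_iteratedDeriv (w : 𝓢(ℝ, F)) (n : ℕ) : Continuous (iteratedDeriv n w) :=
  continuous_iff_continuousAt.2 fun x => (w.hasDerivAt_iteratedDeriv n x).continuousAt

lemma norm_iteratedDeriv_le_seminorm (w : 𝓢(ℝ, F)) (n : ℕ) (x : ℝ) :
    ‖iteratedDeriv n w x‖ ≤ SchwartzMap.seminorm ℝ 0 n w := by
  simpa using w.le_seminorm' ℝ 0 n x

lemma integrable_iteratedDeriv (w : 𝓢(ℝ, F)) (n : ℕ) : Integrable (iteratedDeriv n w) := by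
  rw [← coe_derivCLM_iterate]
  exact SchwartzMap.integrable _

lemma integrable_norm_iteratedDeriv_mul_norm (w : 𝓢(ℝ, F)) (a b : ℕ) :
    Integrable fun x => ‖iteratedDeriv a w x‖ * ‖iteratedDeriv b w x‖ :=
  (w.integrable_iteratedDeriv b).norm.bdd_mul (c := SchwartzMap.seminorm ℝ 0 a w)
    (w.continuous_iteratedDeriv a).norm.aestronglyMeasurable
    (.of_forall fun x => by simpa using w.norm_iteratedDeriv_le_seminorm a x)

end SchwartzMap

def weightedPairing (p : ℝ[X]) (a b : ℕ) (w : 𝓢(ℝ, ℂ)) : ℝ :=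
  ∫ x, p.evalSigmoid x * ⟪iteratedDeriv a w x, iteratedDeriv b w x⟫_ℝ

section WeightedPairing

variable (p : ℝ[X]) (a b : ℕ)

lemma integrable_weightedPairing_integrand (w : 𝓢(ℝ, ℂ)) :
    Integrable fun x => p.evalSigmoid x * ⟪iteratedDeriv a w x, iteratedDeriv b w x⟫_ℝ := by
  obtain ⟨C, hC0, hC⟩ := p.exists_abs_evalSigmoid_le
  refine ((w.integrable_norm_iteratedDeriv_mul_norm a b).const_mul C).mono' ?_
    (.of_forall fun x => ?_)
  · exact (p.continuous_evalSigmoid.mul ((w.continuous_iteratedDeriv a).inner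
      (w.continuous_iteratedDeriv b))).aestronglyMeasurable
  · rw [Real.norm_eq_abs, abs_mul]
    exact mul_le_mul (hC x) (abs_real_inner_le_norm _ _) (abs_nonneg _) hC0

lemma integrable_evalSigmoid_mul_mul_conj (w : 𝓢(ℝ, ℂ)) :
    Integrable fun x =>
      (p.evalSigmoid x : ℂ) * (iteratedDeriv a w x * conj (iteratedDeriv b w x)) := by
  obtain ⟨C, hC0, hC⟩ := p.exists_abs_evalSigmoid_le
  refine ((w.integrable_norm_iteratedDeriv_mul_norm a b).const_mul C).mono' ?_
    (.of_forall fun x => ?_)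
  · exact ((Complex.continuous_ofReal.comp p.continuous_evalSigmoid).mul
      ((w.continuous_iteratedDeriv a).mul
        (Complex.continuous_conj.comp (w.continuous_iteratedDeriv b)))).aestronglyMeasurable
  · rw [norm_mul, norm_mul, RCLike.norm_conj, Complex.norm_real, Real.norm_eq_abs]
    exact mul_le_mul_of_nonneg_right (hC x) (by positivity)

lemma re_integral_evalSigmoid_mul_mul_conj (w : 𝓢(ℝ, ℂ)) :
    (∫ x, (p.evalSigmoid x : ℂ) * (iteratedDeriv a w x * conj (iteratedDeriv b w x))).re =
      weightedPairing p a b w := by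
  rw [weightedPairing, ← RCLike.re_to_complex,
    ← integral_re (integrable_evalSigmoid_mul_mul_conj p a b w)]
  simp only [RCLike.re_to_complex, Complex.re_ofReal_mul, ← Complex.inner, real_inner_comm]

lemma weightedPairing_succ_right :
    weightedPairing p a (b + 1) =
      -weightedPairing p.sigmoidDerivative a b - weightedPairing p (a + 1) b := by
  funext w
  have hderiv : ∀ x, HasDerivAt
      (fun x => p.evalSigmoid x * ⟪iteratedDeriv a w x, iteratedDeriv b w x⟫_ℝ)
      (p.sigmoidDerivative.evalSigmoid x * ⟪iteratedDeriv a w x, iteratedDeriv b w x⟫_ℝ +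
        (p.evalSigmoid x * ⟪iteratedDeriv a w x, iteratedDeriv (b + 1) w x⟫_ℝ +
          p.evalSigmoid x * ⟪iteratedDeriv (a + 1) w x, iteratedDeriv b w x⟫_ℝ)) x :=
    fun x => ((p.hasDerivAt_evalSigmoid x).mul ((w.hasDerivAt_iteratedDeriv a x).inner ℝ
      (w.hasDerivAt_iteratedDeriv b x))).congr_deriv (by ring)
  have I := integrable_weightedPairing_integrand
  have hzero := integral_eq_zero_of_hasDerivAt_of_integrable hderiv
    ((I _ a b w).add ((I p a (b + 1) w).add (I p (a + 1) b w))) (I p a b w)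
  rw [integral_add (I _ a b w), integral_add (I p a (b + 1) w) (I p (a + 1) b w)] at hzero
  · simp only [Pi.sub_apply, Pi.neg_apply, weightedPairing]
    linarith
  · exact (I p a (b + 1) w).add (I p (a + 1) b w)

lemma weightedPairing_comm : weightedPairing p a b = weightedPairing p b a := by
  funext w
  simp only [weightedPairing, real_inner_comm]

lemma weightedPairing_self_succ (m : ℕ) :
    weightedPairing p m (m + 1) = -(1 / 2 : ℝ) • weightedPairing p.sigmoidDerivative m m := by
  have h := congrFun (weightedPairing_succ_right p m m)
  rw [weightedPairing_comm p (m + 1) m] at h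
  funext w
  simp only [Pi.smul_apply, Pi.sub_apply, Pi.neg_apply, smul_eq_mul] at h ⊢
  linarith [h w]

@[simp] lemma weightedPairing_zero : weightedPairing 0 a b = 0 := by
  funext w
  simp [weightedPairing, Polynomial.evalSigmoid]

lemma weightedPairing_neg : weightedPairing (-p) a b = -weightedPairing p a b := by
  funext w
  simp [weightedPairing, integral_neg]

lemma weightedPairing_smul (c : ℝ) :
    weightedPairing (c • p) a b = c • weightedPairing p a b := by
  funext w
  simp [weightedPairing, mul_assoc, integral_const_mul]

end WeightedPairing

lemma HsSq_nonneg (s : ℕ) (f : ℝ → ℂ) : 0 ≤ HsSq s f :=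
  Finset.sum_nonneg fun _ _ => integral_nonneg fun _ => by positivity

lemma integral_norm_iteratedDeriv_sq_le_HsSq {s m : ℕ} (hm : m ≤ s) (f : ℝ → ℂ) :
    ∫ x, ‖iteratedDeriv m f x‖ ^ 2 ≤ HsSq s f :=
  Finset.single_le_sum (f := fun m => ∫ x, ‖iteratedDeriv m f x‖ ^ 2)
    (fun _ _ => integral_nonneg fun _ => by positivity) (Finset.mem_range.2 (by omega))

/-- `F ≡ G [SMOD hsDominated s]` says that `F - G` is `O(‖w‖²_{H^s})` uniformly in `w`. -/
def hsDominated (s : ℕ) : Submodule ℝ (𝓢(ℝ, ℂ) → ℝ) where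
  carrier := {F | ∃ C, ∀ w, |F w| ≤ C * HsSq s w}
  add_mem' := by
    rintro F G ⟨C, hC⟩ ⟨D, hD⟩
    refine ⟨C + D, fun w => (abs_add_le _ _).trans ?_⟩
    rw [add_mul]
    exact add_le_add (hC w) (hD w)
  zero_mem' := ⟨0, fun w => by simp⟩
  smul_mem' := by
    rintro c F ⟨C, hC⟩
    refine ⟨|c| * C, fun w => ?_⟩
    rw [Pi.smul_apply, smul_eq_mul, abs_mul, mul_assoc]
    exact mul_le_mul_of_nonneg_left (hC w) (abs_nonneg c)

lemma weightedPairing_mem_hsDominated (p : ℝ[X]) {s a b : ℕ} (ha : a ≤ s) (hb : b ≤ s) :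
    weightedPairing p a b ∈ hsDominated s := by
  obtain ⟨C, hC0, hC⟩ := p.exists_abs_evalSigmoid_le
  refine ⟨C, fun w => ?_⟩
  have hsq (m : ℕ) : Integrable fun x => ‖iteratedDeriv m w x‖ ^ 2 := by
    simpa only [sq] using w.integrable_norm_iteratedDeriv_mul_norm m m
  have ha' := integral_norm_iteratedDeriv_sq_le_HsSq ha w
  have hb' := integral_norm_iteratedDeriv_sq_le_HsSq hb w
  calc |weightedPairing p a b w|
      ≤ ∫ x, C / 2 * (‖iteratedDeriv a w x‖ ^ 2 + ‖iteratedDeriv b w x‖ ^ 2) := by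
        rw [weightedPairing, ← Real.norm_eq_abs]
        refine norm_integral_le_of_norm_le (((hsq a).add (hsq b)).const_mul _)
          (.of_forall fun x => ?_)
        rw [Real.norm_eq_abs, abs_mul]
        have := mul_le_mul (hC x) (abs_real_inner_le_norm (iteratedDeriv a w x)
          (iteratedDeriv b w x)) (abs_nonneg _) hC0
        nlinarith [two_mul_le_add_sq ‖iteratedDeriv a w x‖ ‖iteratedDeriv b w x‖]
    _ = C / 2 * ((∫ x, ‖iteratedDeriv a w x‖ ^ 2) + ∫ x, ‖iteratedDeriv b w x‖ ^ 2) :=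
        by rw [integral_const_mul, integral_add (hsq a) (hsq b)]
    _ ≤ C * HsSq s w := by nlinarith

lemma weightedPairing_mem_hsDominated_of_add_le (p : ℝ[X]) {s a b : ℕ}
    (h : a + b ≤ 2 * s + 1) :
    weightedPairing p a b ∈ hsDominated s := by
  wlog hab : a ≤ b generalizing a b
  · rw [weightedPairing_comm]
    exact this (a := b) (by omega) (by omega)
  induction b generalizing p a with
  | zero => exact weightedPairing_mem_hsDominated p (by omega) (by omega)
  | succ b ih =>
    by_cases hb : b + 1 ≤ s
    · exact weightedPairing_mem_hsDominated p (by omega) hb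
    by_cases ha : a = b
    · subst ha
      rw [weightedPairing_self_succ]
      exact Submodule.smul_mem _ _ (weightedPairing_mem_hsDominated _ (by omega) (by omega))
    rw [weightedPairing_succ_right]
    exact sub_mem (neg_mem (ih _ (a := a) (by omega) (by omega)))
      (ih _ (a := a + 1) (by omega) (by omega))

lemma weightedPairing_smodEq_of_add_eq_two_mul_add_two (p : ℝ[X]) {s a b : ℕ}
    (h : a + b = 2 * s + 2) :
    weightedPairing p a b ≡
      (-1 : ℝ) ^ (s + 1 + a) • weightedPairing p (s + 1) (s + 1) [SMOD hsDominated s] := by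
  wlog hab : a ≤ b generalizing a b
  · obtain ⟨k, rfl⟩ : ∃ k, a = b + 2 * k := ⟨(a - b) / 2, by omega⟩
    rw [weightedPairing_comm, ← add_assoc, pow_add _ _ (2 * k), pow_mul]
    simpa using this (a := b) (by omega) (by omega)
  induction b generalizing a with
  | zero => omega
  | succ b ih =>
    by_cases hb : b = s
    · subst hb
      obtain rfl : a = b + 1 := by omega
      rw [← two_mul, pow_mul]
      simp
    rw [weightedPairing_succ_right]
    calc _ ≡ -0 - (-1 : ℝ) ^ (s + 1 + (a + 1)) • weightedPairing p (s + 1) (s + 1)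
            [SMOD hsDominated s] :=
          (SModEq.zero.2 (weightedPairing_mem_hsDominated_of_add_le _ (by omega))).neg.sub
            (ih (a := a + 1) (by omega) (by omega))
      _ = _ := by rw [← add_assoc, pow_succ]; module

lemma weightedPairing_smodEq_of_add_eq_two_mul_add_three (p : ℝ[X]) {s a b : ℕ}
    (h : a + b = 2 * s + 3) :
    weightedPairing p a b ≡
      ((-1 : ℝ) ^ (s + a) * ((s : ℝ) + 3 / 2 - a)) •
        weightedPairing p.sigmoidDerivative (s + 1) (s + 1) [SMOD hsDominated s] := by
  wlog hab : a ≤ b generalizing a b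
  · obtain ⟨k, rfl⟩ : ∃ k, a = b + 2 * k + 1 := ⟨(a - b) / 2, by omega⟩
    have hk : (k : ℝ) = s + 1 - b := by
      have := congrArg (Nat.cast (R := ℝ)) h
      push_cast at this
      linarith
    rw [weightedPairing_comm]
    convert this (a := b) (b := b + 2 * k + 1) (by omega) (by omega) using 2
    rw [show s + (b + 2 * k + 1) = s + b + 2 * k + 1 by ring, pow_succ, pow_add _ _ (2 * k),
      pow_mul]
    push_cast
    rw [hk]
    ring
  induction b generalizing a with
  | zero => omega
  | succ b ih =>
    by_cases hb : b = s + 1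
    · subst hb
      obtain rfl : a = s + 1 := by omega
      rw [weightedPairing_self_succ]
      convert SModEq.rfl using 2
      rw [show s + (s + 1) = 2 * s + 1 by ring, pow_succ, pow_mul]
      push_cast
      ring
    rw [weightedPairing_succ_right]
    calc _ ≡ -((-1 : ℝ) ^ (s + 1 + a) • weightedPairing p.sigmoidDerivative (s + 1) (s + 1)) -
            ((-1 : ℝ) ^ (s + (a + 1)) * ((s : ℝ) + 3 / 2 - (a + 1 : ℕ))) •
              weightedPairing p.sigmoidDerivative (s + 1) (s + 1) [SMOD hsDominated s] :=
          (weightedPairing_smodEq_of_add_eq_two_mul_add_two _ (by omega)).neg.sub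
            (ih (a := a + 1) (by omega) (by omega))
      _ = _ := by push_cast; module

lemma weightedPairing_one_eq_zero_of_odd {a b : ℕ} (h : Odd (a + b)) :
    weightedPairing 1 a b = 0 := by
  wlog hab : a ≤ b generalizing a b
  · rw [weightedPairing_comm]
    exact this (a := b) (by rwa [add_comm]) (by omega)
  obtain ⟨k, rfl⟩ : ∃ k, b = a + 2 * k + 1 := by
    obtain ⟨k, hk⟩ := h
    exact ⟨k - a, by omega⟩
  clear h hab
  induction k generalizing a with
  | zero => simp [weightedPairing_self_succ]
  | succ k ih =>
    rw [show a + 2 * (k + 1) + 1 = a + 2 * k + 2 + 1 by ring, weightedPairing_succ_right,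
      show a + 2 * k + 2 = a + 1 + 2 * k + 1 by ring, ih]
    simp

def solitonPoly : ℝ[X] := C 12 * (X - X ^ 2)

def rCoeff (s : ℕ) : ℝ := -(((s : ℝ) + 3 / 2) / ((s : ℝ) - 3 / 2))

lemma rCoeff_mul_sub_three_halves (s : ℕ) :
    rCoeff s * ((s : ℝ) - 3 / 2) = -((s : ℝ) + 3 / 2) := by
  have hne : (s : ℝ) - 3 / 2 ≠ 0 := by
    intro h
    have : ((2 * s : ℕ) : ℝ) = 3 := by push_cast; linarith
    norm_cast at this
    omega
  rw [rCoeff, neg_mul, div_mul_cancel₀ _ hne]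

lemma Q_eq_evalSigmoid (x : ℝ) : Q x = solitonPoly.evalSigmoid x := by
  have hsq : Real.exp (-x) = Real.exp (-(x / 2)) ^ 2 := by
    rw [← Real.exp_nat_mul]
    ring_nf
  have hinv : Real.exp (x / 2) = (Real.exp (-(x / 2)))⁻¹ := by rw [Real.exp_neg, inv_inv]
  simp only [Q, solitonPoly, Polynomial.evalSigmoid, Real.sigmoid_def, eval_mul, eval_C, eval_sub,
    eval_X, eval_pow, Real.cosh_eq, hsq, hinv]
  field_simp
  ring

lemma re_integral_sum_mul_conj_sum {ι κ : Type*} [Fintype ι] [Fintype κ] (p : ι → ℝ[X])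
    (a : ι → ℕ) (q : κ → ℝ[X]) (b : κ → ℕ) (w : 𝓢(ℝ, ℂ)) :
    (∫ x, (∑ i, ((p i).evalSigmoid x : ℂ) * iteratedDeriv (a i) w x) *
        conj (∑ j, ((q j).evalSigmoid x : ℂ) * iteratedDeriv (b j) w x)).re =
      ∑ i, ∑ j, weightedPairing (p i * q j) (a i) (b j) w := by
  have hexpand (x : ℝ) :
      (∑ i, ((p i).evalSigmoid x : ℂ) * iteratedDeriv (a i) w x) *
        conj (∑ j, ((q j).evalSigmoid x : ℂ) * iteratedDeriv (b j) w x) =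
      ∑ i, ∑ j, (((p i * q j).evalSigmoid x : ℝ) : ℂ) *
        (iteratedDeriv (a i) w x * conj (iteratedDeriv (b j) w x)) := by
    simp only [map_sum, map_mul, Complex.conj_ofReal, Finset.sum_mul_sum,
      Polynomial.evalSigmoid_mul, Complex.ofReal_mul]
    exact Finset.sum_congr rfl fun i _ => Finset.sum_congr rfl fun j _ => by ring
  have hint := integrable_evalSigmoid_mul_mul_conj
  simp_rw [hexpand]
  rw [integral_finsetSum _ fun i _ => integrable_finsetSum _ fun j _ => hint _ _ _ w,
    Complex.re_sum]
  refine Finset.sum_congr rfl fun i _ => ?_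
  rw [integral_finsetSum _ fun j _ => hint _ _ _ w, Complex.re_sum]
  exact Finset.sum_congr rfl fun j _ => re_integral_evalSigmoid_mul_mul_conj _ _ _ w

lemma deriv_Lop_eq_sum (w : 𝓢(ℝ, ℂ)) (x : ℝ) :
    deriv (fun y => Lop w y) x =
      ∑ i : Fin 4, (((![-1, -solitonPoly.sigmoidDerivative, -solitonPoly, 1] i).evalSigmoid x :
        ℝ) : ℂ) * iteratedDeriv (![3, 0, 1, 1] i) w x := by
  have hQ : HasDerivAt (fun y => (Q y : ℂ)) (solitonPoly.sigmoidDerivative.evalSigmoid x) x := by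
    simp_rw [Q_eq_evalSigmoid]
    exact (solitonPoly.hasDerivAt_evalSigmoid x).ofReal_comp
  have hw := w.hasDerivAt_iteratedDeriv 0 x
  rw [iteratedDeriv_zero] at hw
  have hL : HasDerivAt (fun y => Lop w y) _ x :=
    ((w.hasDerivAt_iteratedDeriv 2 x).neg.sub (hQ.mul hw)).add hw
  rw [hL.deriv]
  simp [Fin.sum_univ_four, Q_eq_evalSigmoid]
  ring

lemma Ls_eq_sum (s : ℕ) (w : 𝓢(ℝ, ℂ)) (x : ℝ) :
    Ls s w x = ∑ j : Fin 2,
      (((![1, rCoeff s • solitonPoly] j).evalSigmoid x : ℝ) : ℂ) *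
        iteratedDeriv (![2 * s + 2, 2 * s] j) w x := by
  simp [Ls, r, rCoeff, Fin.sum_univ_two, Q_eq_evalSigmoid]

lemma re_integral_deriv_Lop_mul_conj_Ls (s : ℕ) :
    (fun w : 𝓢(ℝ, ℂ) => (∫ x, deriv (fun y => Lop w y) x * conj (Ls s w x)).re) =
      -weightedPairing 1 3 (2 * s + 2)
        - weightedPairing solitonPoly.sigmoidDerivative 0 (2 * s + 2)
        - weightedPairing solitonPoly 1 (2 * s + 2) + weightedPairing 1 1 (2 * s + 2)
        + rCoeff s • (-weightedPairing solitonPoly 3 (2 * s)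
          - weightedPairing (solitonPoly.sigmoidDerivative * solitonPoly) 0 (2 * s)
          - weightedPairing (solitonPoly * solitonPoly) 1 (2 * s)
          + weightedPairing solitonPoly 1 (2 * s)) := by
  funext w
  simp_rw [deriv_Lop_eq_sum, Ls_eq_sum]
  rw [re_integral_sum_mul_conj_sum]
  simp [Fin.sum_univ_succ, weightedPairing_neg, weightedPairing_smul]
  ring

lemma re_integral_deriv_Lop_mul_conj_Ls_mem_hsDominated (s : ℕ) :
    (fun w : 𝓢(ℝ, ℂ) => (∫ x, deriv (fun y => Lop w y) x * conj (Ls s w x)).re) ∈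
      hsDominated s := by
  have heven := weightedPairing_smodEq_of_add_eq_two_mul_add_two
  have hodd := weightedPairing_smodEq_of_add_eq_two_mul_add_three
  set T := weightedPairing solitonPoly.sigmoidDerivative (s + 1) (s + 1)
  have hlow (p : ℝ[X]) {a b : ℕ} (h : a + b ≤ 2 * s + 1) :
      weightedPairing p a b ≡ 0 [SMOD hsDominated s] :=
    SModEq.zero.2 (weightedPairing_mem_hsDominated_of_add_le p h)
  rw [re_integral_deriv_Lop_mul_conj_Ls, ← SModEq.zero,
    weightedPairing_one_eq_zero_of_odd ⟨s + 2, by ring⟩,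
    weightedPairing_one_eq_zero_of_odd ⟨s + 1, by ring⟩]
  calc _ ≡ -0 - (-1 : ℝ) ^ (s + 1 + 0) • T
          - ((-1 : ℝ) ^ (s + 1) * ((s : ℝ) + 3 / 2 - (1 : ℕ))) • T + 0
          + rCoeff s •
            (-(((-1 : ℝ) ^ (s + 3) * ((s : ℝ) + 3 / 2 - (3 : ℕ))) • T) - 0 - 0 + 0)
          [SMOD hsDominated s] :=
        (((SModEq.rfl.neg.sub (heven _ (by ring))).sub (hodd _ (by ring))).add SModEq.rfl).add
          (((((hodd _ (by ring)).neg.sub (hlow _ (by omega))).sub (hlow _ (by omega))).add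
            (hlow _ (by omega))).smul (rCoeff s))
    _ = 0 := by
        match_scalars
        linear_combination (-(-1 : ℝ) ^ (s + 1)) * rCoeff_mul_sub_three_halves s

end

theorem higher_order_cancellation_general (s : ℕ) :
    ∃ C : ℝ, 0 < C ∧ ∀ w : SchwartzMap ℝ ℂ,
      |(∫ x : ℝ, deriv (fun y : ℝ => Lop (⇑w) y) x * conj (Ls s (⇑w) x)).re|
        ≤ C * HsSq s (⇑w) := by
  obtain ⟨C, hC⟩ := re_integral_deriv_Lop_mul_conj_Ls_mem_hsDominated s
  exact ⟨max C 1, by positivity, fun w =>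
    (hC w).trans (mul_le_mul_of_nonneg_right (le_max_left _ _) (HsSq_nonneg s w))⟩

/-- Higher-order approximate conservation law: the choice of `r_{s+1}` cancels the
top-order terms, so `|Re ∫ ∂ₓ(𝓛 w) · conj(𝓛_{s+1} w)| ≤ C ‖w‖²_{H^s}`. -/
theorem higher_order_cancellation (s : ℕ) (hs : 1 ≤ s) :
    ∃ C : ℝ, 0 < C ∧ ∀ w : SchwartzMap ℝ ℂ,
      |(∫ x : ℝ, deriv (fun y : ℝ => Lop (⇑w) y) x * conj (Ls s (⇑w) x)).re|
        ≤ C * HsSq s (⇑w) :=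
  higher_order_cancellation_general s
end

section
/- Let λ ∈ ℂ with Re λ > 0 and let η ∈ ℝ with η ≠ 0. Then, counting with multiplicity, the polynomial P(μ) = μ⁴ − 4μ² + 4λμ + 3η² has exactly two roots with strictly positive real part and exactly two roots with strictly negative real part. -/
open Polynomial
open scoped Classical

/-!
On the imaginary axis `P(tI) = t⁴ + 4t² + 3η² + 4tλI` has imaginary part `4t Re λ`, which vanishes
only at `t = 0`, where `P(0) = 3η² > 0`. So `t ↦ P(tI)` never meets `(-∞, 0]`, and in particular
`P` has no purely imaginary roots. Writing `P(tI) = ∏ (t - w)` over the rotated roots `w = -Iμ`,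
the sum of the continuous branches `arg (t - w)` is an argument of `P(tI)` that never reaches `±π`,
hence stays in `(-π, π)`. It tends to `0` as `t → +∞` and to
`π (#{Re μ > 0} - #{Re μ < 0})` as `t → -∞`, so these two counts differ by at most one; since they
add up to `4`, both are `2`.
-/

open Complex Filter Topology Set
open scoped Real

theorem Continuous.mem_Ioo_of_forall_ne {X α : Type*} [TopologicalSpace X] [PreconnectedSpace X]
    [LinearOrder α] [TopologicalSpace α] [OrderClosedTopology α]
    {f : X → α} (hf : Continuous f) {a b : α} (ha : ∀ x, f x ≠ a) (hb : ∀ x, f x ≠ b)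
    {x₀ : X} (h₀ : f x₀ ∈ Ioo a b) (x : X) : f x ∈ Ioo a b := by
  refine ⟨?_, ?_⟩ <;> by_contra! h
  · obtain ⟨y, hy⟩ := intermediate_value_univ x x₀ hf ⟨h, h₀.1.le⟩
    exact ha y hy
  · obtain ⟨y, hy⟩ := intermediate_value_univ x₀ x hf ⟨h₀.2.le, h⟩
    exact hb y hy

theorem Multiset.filter_not_pos_eq_filter_neg {α β : Type*} [LinearOrder β] [Zero β]
    {s : Multiset α} {g : α → β} (hg : ∀ a ∈ s, g a ≠ 0) :
    s.filter (fun a => ¬0 < g a) = s.filter (g · < 0) :=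
  Multiset.filter_congr fun a ha =>
    ⟨fun h => lt_of_le_of_ne (not_lt.1 h) (hg a ha), fun h => h.not_gt⟩

theorem Multiset.sum_map_ite_const {α M : Type*} [AddCommMonoid M] (s : Multiset α)
    (p : α → Prop) [DecidablePred p] (a b : M) :
    (s.map fun x => if p x then a else b).sum =
      (s.filter p).card • a + (s.filter (¬p ·)).card • b := by
  induction s using Multiset.induction_on with
  | empty => simp
  | cons x s ih =>
    by_cases h : p x <;> simp [h, ih, add_smul] <;> abel

namespace Complex

theorem multiset_prod_eq_prod_norm_mul_exp (s : Multiset ℂ) :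
    s.prod = ((s.map (‖·‖)).prod : ℂ) * exp ((s.map arg).sum * I) := by
  induction s using Multiset.induction_on with
  | empty => simp
  | cons z s ih =>
    simp only [Multiset.map_cons, Multiset.prod_cons, Multiset.sum_cons, ofReal_mul, ofReal_add,
      add_mul, exp_add]
    conv_lhs => rw [ih, ← norm_mul_exp_arg_mul_I z]
    ring

theorem cos_sum_arg_ne_neg_one {s : Multiset ℂ} (hs : s.prod ∈ slitPlane) :
    Real.cos (s.map arg).sum ≠ -1 := by
  intro hcos
  have hsin : Real.sin (s.map arg).sum = 0 := by
    nlinarith [Real.sin_sq_add_cos_sq (s.map arg).sum]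
  rw [multiset_prod_eq_prod_norm_mul_exp, exp_mul_I, ← ofReal_cos, ← ofReal_sin, hcos, hsin,
    mem_slitPlane_iff] at hs
  simp only [ofReal_neg, ofReal_one, ofReal_zero, zero_mul, add_zero, mul_neg, mul_one, neg_re,
    ofReal_re, neg_im, ofReal_im, neg_zero, ne_eq, not_true_eq_false, or_false, neg_pos] at hs
  exact hs.not_ge (Multiset.prod_nonneg fun _ h => by
    obtain ⟨z, -, rfl⟩ := Multiset.mem_map.1 h; exact norm_nonneg z)

theorem tendsto_arg_ofReal_add_atTop (c : ℂ) :
    Tendsto (fun u : ℝ => arg (u + c)) atTop (𝓝 0) := by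
  have h1 : Tendsto (fun u : ℝ => 1 + c * (u : ℂ)⁻¹) atTop (𝓝 1) := by
    have := ((continuous_ofReal.tendsto' 0 0 ofReal_zero).comp tendsto_inv_atTop_zero)
    simpa using (this.const_mul c).const_add 1
  have h2 := ((continuousAt_arg one_mem_slitPlane).tendsto.comp h1)
  rw [arg_one] at h2
  refine h2.congr' ?_
  filter_upwards [eventually_gt_atTop 0] with u hu
  simp only [Function.comp_apply]
  rw [← arg_real_mul _ hu]
  have : (u : ℂ) ≠ 0 := by exact_mod_cast hu.ne'
  congr 1
  field_simp

theorem continuous_arg_ofReal_sub {w : ℂ} (hw : w.im ≠ 0) :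
    Continuous fun t : ℝ => arg (t - w) :=
  continuous_iff_continuousAt.2 fun t =>
    (continuousAt_arg (mem_slitPlane_iff.2 (Or.inr (by simpa using hw)))).comp (by fun_prop)

theorem tendsto_arg_ofReal_sub_atBot {w : ℂ} (hw : w.im ≠ 0) :
    Tendsto (fun t : ℝ => arg (t - w)) atBot (𝓝 (if 0 < w.im then -π else π)) := by
  have h := (tendsto_arg_ofReal_add_atTop w).comp tendsto_neg_atBot_atTop
  have hneg : ∀ t : ℝ, (t : ℂ) - w = -(((-t : ℝ) : ℂ) + w) := fun t => by push_cast; ring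
  split_ifs with hw'
  · refine (zero_sub π ▸ h.sub_const π).congr fun t => ?_
    rw [hneg, arg_neg_eq_arg_sub_pi_of_im_pos (by simpa using hw')]
    rfl
  · have hw' : w.im < 0 := lt_of_le_of_ne (not_lt.1 hw') hw
    refine (zero_add π ▸ h.add_const π).congr fun t => ?_
    rw [hneg, arg_neg_eq_arg_add_pi_of_im_neg (by simpa using hw')]
    rfl

theorem abs_card_filter_im_neg_sub_card_filter_im_pos_le_one (s : Multiset ℂ)
    (hs : ∀ w ∈ s, w.im ≠ 0) (hslit : ∀ t : ℝ, (s.map fun w => (t : ℂ) - w).prod ∈ slitPlane) :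
    |((s.filter (·.im < 0)).card : ℤ) - (s.filter (0 < ·.im)).card| ≤ 1 := by
  set f : ℝ → ℝ := fun t => (s.map fun w => arg ((t : ℂ) - w)).sum
  have hcont : Continuous f :=
    continuous_multiset_sum s fun w hw => continuous_arg_ofReal_sub (hs w hw)
  have hcos : ∀ t, Real.cos (f t) ≠ -1 := fun t => by
    simpa [f, Multiset.map_map, Function.comp_def] using cos_sum_arg_ne_neg_one (hslit t)
  have htop : Tendsto f atTop (𝓝 0) := by
    simpa only [← sub_eq_add_neg, Multiset.map_const', Multiset.sum_replicate, smul_zero] using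
      tendsto_multiset_sum s fun w _ => tendsto_arg_ofReal_add_atTop (-w)
  have hbot : Tendsto f atBot
      (𝓝 (π * (s.filter (·.im < 0)).card - π * (s.filter (0 < ·.im)).card)) := by
    have := tendsto_multiset_sum s fun w hw => tendsto_arg_ofReal_sub_atBot (hs w hw)
    rw [Multiset.sum_map_ite_const, Multiset.filter_not_pos_eq_filter_neg hs, nsmul_eq_mul,
      nsmul_eq_mul] at this
    convert this using 2
    ring
  obtain ⟨t₀, ht₀⟩ :=
    (htop.eventually (Ioo_mem_nhds (neg_neg_of_pos Real.pi_pos) Real.pi_pos)).exists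
  have hIoo := hcont.mem_Ioo_of_forall_ne
    (fun t h => hcos t (by rw [h, Real.cos_neg, Real.cos_pi]))
    (fun t h => hcos t (by rw [h, Real.cos_pi])) ht₀
  have hlim := isClosed_Icc.mem_of_tendsto hbot
    (Eventually.of_forall fun t => Ioo_subset_Icc_self (hIoo t))
  have : |((s.filter (·.im < 0)).card : ℝ) - (s.filter (0 < ·.im)).card| ≤ 1 := by
    rw [abs_le]
    constructor <;> nlinarith [Real.pi_pos, hlim.1, hlim.2]
  exact_mod_cast this

end Complex

namespace Polynomial

theorem Monic.eval_mul_I_eq {p : ℂ[X]} (hp : p.Monic) (z : ℂ) :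
    p.eval (z * I) = I ^ p.natDegree * ((p.roots.map (-I * ·)).map (z - ·)).prod := by
  have hsplit := IsAlgClosed.splits p
  rw [hsplit.eval_eq_prod_roots_of_monic hp, hsplit.natDegree_eq_card_roots, Multiset.map_map,
    ← Multiset.prod_replicate, ← Multiset.map_const', ← Multiset.prod_map_mul]
  congr 1
  refine Multiset.map_congr rfl fun μ _ => ?_
  simp only [Function.comp_apply]
  ring_nf
  rw [I_sq]
  ring

theorem re_ne_zero_of_mem_roots {p : ℂ[X]} {c : ℂ}
    (hslit : ∀ t : ℝ, c * p.eval (t * I) ∈ slitPlane) {μ : ℂ} (hμ : μ ∈ p.roots) : μ.re ≠ 0 := by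
  intro hre
  have hμI : μ = (μ.im : ℂ) * I := by apply Complex.ext <;> simp [hre]
  have := hslit μ.im
  rw [← hμI, (mem_roots'.1 hμ).2, mul_zero] at this
  exact slitPlane_ne_zero this rfl

theorem card_filter_re_pos_add_card_filter_re_neg {p : ℂ[X]} (hre : ∀ μ ∈ p.roots, μ.re ≠ 0) :
    (p.roots.filter (0 < ·.re)).card + (p.roots.filter (·.re < 0)).card = p.natDegree := by
  rw [← Multiset.filter_not_pos_eq_filter_neg hre, ← Multiset.card_add, Multiset.filter_add_not,
    (IsAlgClosed.splits _).natDegree_eq_card_roots]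

theorem Monic.abs_card_filter_re_pos_sub_card_filter_re_neg_le_one {p : ℂ[X]} (hp : p.Monic)
    (hslit : ∀ t : ℝ, (-I) ^ p.natDegree * p.eval (t * I) ∈ slitPlane) :
    |((p.roots.filter (0 < ·.re)).card : ℤ) - (p.roots.filter (·.re < 0)).card| ≤ 1 := by
  set s := p.roots.map (-I * ·)
  have hs : ∀ w ∈ s, w.im ≠ 0 := fun w hw => by
    obtain ⟨μ, hμ, rfl⟩ := Multiset.mem_map.1 hw
    simpa using re_ne_zero_of_mem_roots hslit hμ
  have hunit : (-I) ^ p.natDegree * I ^ p.natDegree = 1 := by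
    rw [← mul_pow, neg_mul, I_mul_I, neg_neg, one_pow]
  have hprod : ∀ t : ℝ, (s.map fun w => (t : ℂ) - w).prod ∈ slitPlane := fun t => by
    simpa only [hp.eval_mul_I_eq, ← mul_assoc, hunit, one_mul] using hslit t
  have hR : (s.filter (·.im < 0)).card = (p.roots.filter (0 < ·.re)).card := by
    simp [s, Multiset.filter_map]
  have hL : (s.filter (0 < ·.im)).card = (p.roots.filter (·.re < 0)).card := by
    simp [s, Multiset.filter_map]
  simpa [hR, hL] using abs_card_filter_im_neg_sub_card_filter_im_pos_le_one s hs hprod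

end Polynomial

noncomputable def kpCharPoly (lam : ℂ) (η : ℝ) : ℂ[X] :=
  X ^ 4 - C 4 * X ^ 2 + C (4 * lam) * X + C (3 * (η : ℂ) ^ 2)

namespace kpCharPoly

variable (lam : ℂ) (η : ℝ)

theorem monic : (kpCharPoly lam η).Monic := by
  unfold kpCharPoly; monicity!

theorem natDegree_eq : (kpCharPoly lam η).natDegree = 4 := by
  unfold kpCharPoly; compute_degree!

theorem eval_mul_I (t : ℝ) : (kpCharPoly lam η).eval (t * I) =
    ((t ^ 4 + 4 * t ^ 2 + 3 * η ^ 2 : ℝ) : ℂ) + 4 * t * lam * I := by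
  simp only [kpCharPoly, eval_add, eval_sub, eval_mul, eval_pow, eval_C, eval_X]
  push_cast
  ring_nf
  simp only [I_sq, I_pow_four]
  ring

variable {lam η}

theorem eval_mul_I_mem_slitPlane (hlam : 0 < lam.re) (hη : η ≠ 0) (t : ℝ) :
    (kpCharPoly lam η).eval (t * I) ∈ slitPlane := by
  rw [eval_mul_I, mem_slitPlane_iff]
  rcases eq_or_ne t 0 with rfl | ht
  · left
    simp only [add_re, ofReal_re, ofReal_zero, mul_zero, zero_mul, zero_re]
    positivity
  · right
    simp only [add_im, ofReal_im, mul_I_im, zero_add]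
    simpa using ⟨ht, hlam.ne'⟩

end kpCharPoly

/-- For `Re λ > 0` and real `η ≠ 0`, the polynomial `P(μ) = μ⁴ − 4μ² + 4λμ + 3η²`
has (counting multiplicity) exactly two roots with positive real part and exactly two
roots with negative real part. -/
theorem char_poly_root_count (lam : ℂ) (hlam : 0 < lam.re) (η : ℝ) (hη : η ≠ 0) :
    (((X ^ 4 - C 4 * X ^ 2 + C (4 * lam) * X + C (3 * (η : ℂ) ^ 2) : Polynomial ℂ).roots.filter
        fun μ => 0 < μ.re).card = 2) ∧
    (((X ^ 4 - C 4 * X ^ 2 + C (4 * lam) * X + C (3 * (η : ℂ) ^ 2) : Polynomial ℂ).roots.filter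
        fun μ => μ.re < 0).card = 2) := by
  change ((kpCharPoly lam η).roots.filter _).card = 2 ∧
    ((kpCharPoly lam η).roots.filter _).card = 2
  have hslit : ∀ t : ℝ,
      (-I) ^ (kpCharPoly lam η).natDegree * (kpCharPoly lam η).eval (t * I) ∈ slitPlane := by
    have hI : (-I) ^ 4 = 1 := by rw [neg_pow, I_pow_four]; norm_num
    simpa only [kpCharPoly.natDegree_eq, hI, one_mul] using
      kpCharPoly.eval_mul_I_mem_slitPlane hlam hη
  have hwind := (kpCharPoly.monic lam η).abs_card_filter_re_pos_sub_card_filter_re_neg_le_one hslit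
  have hcard := card_filter_re_pos_add_card_filter_re_neg fun μ => re_ne_zero_of_mem_roots hslit
  rw [kpCharPoly.natDegree_eq] at hcard
  rw [abs_le] at hwind
  omega
end

section
/- Let λ, η ∈ ℂ and let μ ∈ ℂ be a root of P(μ) = μ⁴ − 4μ² + 4λμ + 3η². Then the function g(z) = e^{μz} ( μ³ + 2μ + λ − 3μ² tanh z ) satisfies the fourth-order ODE g'''' + 4Φ g'' + 4λ g' − 4 g'' + 3η² g = 0 on ℝ, where Φ(z) = 3 sech² z. -/
/-!
Functions of the form `e^{μz} p(tanh z)` with `p` a polynomial are closed under differentiation: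
since `tanh' = 1 - tanh²`, the derivative acts on `p` by `p ↦ μ p + (1 - t²) p'`. As also
`sech² = 1 - tanh²`, the left-hand side of the ODE for `g` is `e^{μz} q(tanh z)` for an explicitly
computable polynomial `q`, and for `p = μ³ + 2μ + λ - 3μ² t` this `q` turns out to be `P(μ) p`.
-/

open Polynomial

theorem Real.one_sub_tanh_sq (x : ℝ) : 1 - Real.tanh x ^ 2 = (1 / Real.cosh x) ^ 2 := by
  have := Real.cosh_sq x
  rw [Real.tanh_eq_sinh_div_cosh]
  field_simp
  linarith

theorem Real.hasDerivAt_tanh (x : ℝ) : HasDerivAt Real.tanh (1 - Real.tanh x ^ 2) x := by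
  have h := (Real.hasDerivAt_sinh x).div (Real.hasDerivAt_cosh x) (Real.cosh_pos x).ne'
  rw [show Real.sinh / Real.cosh = Real.tanh from
    funext fun y => (Real.tanh_eq_sinh_div_cosh y).symm] at h
  refine h.congr_deriv ?_
  rw [Real.tanh_eq_sinh_div_cosh]
  field_simp

noncomputable def expTanhDeriv (μ : ℂ) (p : ℂ[X]) : ℂ[X] :=
  C μ * p + derivative p * (1 - X ^ 2)

theorem hasDerivAt_cexp_mul_eval_tanh (μ : ℂ) (p : ℂ[X]) (z : ℝ) :
    HasDerivAt (fun x : ℝ => Complex.exp (μ * x) * p.eval (Real.tanh x : ℂ))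
      (Complex.exp (μ * z) * (expTanhDeriv μ p).eval (Real.tanh z : ℂ)) z := by
  have hexp : HasDerivAt (fun x : ℝ => Complex.exp (μ * x)) (Complex.exp (μ * z) * μ) z := by
    simpa using ((hasDerivAt_id z).ofReal_comp.const_mul μ).cexp
  have hpoly := (p.hasDerivAt (Real.tanh z : ℂ)).comp z (Real.hasDerivAt_tanh z).ofReal_comp
  refine (hexp.mul hpoly).congr_deriv ?_
  simp only [expTanhDeriv, Function.comp_apply, eval_add, eval_mul, eval_C, eval_sub, eval_one,
    eval_pow, eval_X, Complex.ofReal_sub, Complex.ofReal_one, Complex.ofReal_pow]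
  ring

theorem iteratedDeriv_cexp_mul_eval_tanh (μ : ℂ) (p : ℂ[X]) (n : ℕ) :
    iteratedDeriv n (fun x : ℝ => Complex.exp (μ * x) * p.eval (Real.tanh x : ℂ)) =
      fun x : ℝ => Complex.exp (μ * x) * ((expTanhDeriv μ)^[n] p).eval (Real.tanh x : ℂ) := by
  induction n with
  | zero => rfl
  | succ n ih =>
    rw [iteratedDeriv_succ, ih, Function.iterate_succ_apply']
    funext z
    exact (hasDerivAt_cexp_mul_eval_tanh μ _ z).deriv

noncomputable def eigenmodeProfile (lam μ : ℂ) : ℂ[X] :=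
  C (μ ^ 3 + 2 * μ + lam) - C (3 * μ ^ 2) * X

theorem expTanhDeriv_eigenmodeProfile (lam η μ : ℂ) :
    (expTanhDeriv μ)^[4] (eigenmodeProfile lam μ)
        + (C 12 * (1 - X ^ 2) - 4) * (expTanhDeriv μ)^[2] (eigenmodeProfile lam μ)
        + C (4 * lam) * expTanhDeriv μ (eigenmodeProfile lam μ)
        + C (3 * η ^ 2) * eigenmodeProfile lam μ
      = C (μ ^ 4 - 4 * μ ^ 2 + 4 * lam * μ + 3 * η ^ 2) * eigenmodeProfile lam μ := by
  refine Polynomial.funext fun t => ?_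
  -- keep `C` applied to atoms so that `derivative_C` fires
  simp [eigenmodeProfile, expTanhDeriv, Function.iterate_succ_apply', -map_pow, -map_mul,
    -map_add, -map_sub]
  ring

/-- If `μ` is a root of `P(μ) = μ⁴ − 4μ² + 4λμ + 3η²`, then
`g(z) = e^{μz}(μ³ + 2μ + λ − 3μ² tanh z)` solves
`g'''' + 4Φ g'' + 4λ g' − 4g'' + 3η² g = 0` with `Φ(z) = 3 sech² z`. -/
theorem explicit_solution_of_eigenmode_ODE (lam η μ : ℂ)
    (hroot : μ ^ 4 - 4 * μ ^ 2 + 4 * lam * μ + 3 * η ^ 2 = 0) :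
    ∀ z : ℝ,
      iteratedDeriv 4
          (fun z' : ℝ => Complex.exp (μ * z') * (μ ^ 3 + 2 * μ + lam - 3 * μ ^ 2 * Real.tanh z')) z
        + 4 * (3 * (1 / Real.cosh z) ^ 2 : ℝ) *
            iteratedDeriv 2
              (fun z' : ℝ => Complex.exp (μ * z') * (μ ^ 3 + 2 * μ + lam - 3 * μ ^ 2 * Real.tanh z')) z
        + 4 * lam *
            deriv
              (fun z' : ℝ => Complex.exp (μ * z') * (μ ^ 3 + 2 * μ + lam - 3 * μ ^ 2 * Real.tanh z')) z
        - 4 * iteratedDeriv 2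
              (fun z' : ℝ => Complex.exp (μ * z') * (μ ^ 3 + 2 * μ + lam - 3 * μ ^ 2 * Real.tanh z')) z
        + 3 * η ^ 2 * (Complex.exp (μ * z) * (μ ^ 3 + 2 * μ + lam - 3 * μ ^ 2 * Real.tanh z)) = 0 := by
  intro z
  have hg : (fun z' : ℝ => Complex.exp (μ * z') * (μ ^ 3 + 2 * μ + lam - 3 * μ ^ 2 * Real.tanh z'))
      = fun x : ℝ => Complex.exp (μ * x) * (eigenmodeProfile lam μ).eval (Real.tanh x : ℂ) := by
    simp [eigenmodeProfile]
  have hsech : ((3 * (1 / Real.cosh z) ^ 2 : ℝ) : ℂ) = 3 * (1 - (Real.tanh z : ℂ) ^ 2) := by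
    rw [← Real.one_sub_tanh_sq]
    push_cast
    ring
  have hp : (eigenmodeProfile lam μ).eval (Real.tanh z : ℂ)
      = μ ^ 3 + 2 * μ + lam - 3 * μ ^ 2 * Real.tanh z := by
    simp [eigenmodeProfile]
  have hpoly := congrArg (eval (Real.tanh z : ℂ)) (expTanhDeriv_eigenmodeProfile lam η μ)
  simp only [eval_add, eval_mul, eval_sub, eval_C, eval_one, eval_pow, eval_X, eval_ofNat] at hpoly
  rw [← iteratedDeriv_one, hg, iteratedDeriv_cexp_mul_eval_tanh, iteratedDeriv_cexp_mul_eval_tanh,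
    iteratedDeriv_cexp_mul_eval_tanh, Function.iterate_one, hsech, ← hp]
  linear_combination Complex.exp (μ * z) * hpoly
    + Complex.exp (μ * z) * (eigenmodeProfile lam μ).eval (Real.tanh z : ℂ) * hroot
end
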